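/- Let H_k (k ≥ 3) be the tree obtained by subdividing each edge of the star K_{1,k} exactly once (i.e., H_k is a spider with k legs of length 2). Then cfc(H_k) = k. -/

import Mathlib

/-! Between inner vertices of two different legs the only path runs through the centre, so a
conflict-free colouring gives the `k` inner edges pairwise distinct colours. Conversely, colour
the inner edge of leg `i` by `i` and its outer edge by `i + 1 mod k`: on a path meeting two legs
`i ≠ j`, one of the colours `i`, `j` occurs exactly once, because `k ≥ 3` rules out
`i + 1 ≡ j` and `j + 1 ≡ i` holding together. -/

open SimpleGraph

/-- An edge coloring `c` makes `G` conflict-free connected: every two distinct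
vertices are joined by a path containing a color used on exactly one of its edges. -/
def IsCFConnColoring {V : Type*} (G : SimpleGraph V) (c : Sym2 V → ℕ) : Prop :=
  ∀ u v : V, u ≠ v → ∃ p : G.Walk u v, p.IsPath ∧
    ∃ col : ℕ, (p.edges.filter (fun e => c e = col)).length = 1

/-- The conflict-free connection number: the minimum number of colors in a
conflict-free connection coloring. -/
noncomputable def cfcNum {V : Type*} (G : SimpleGraph V) : ℕ :=
  sInf {k | ∃ c : Sym2 V → ℕ, (∀ e, c e < k) ∧ IsCFConnColoring G c}

/-- The independence number: the maximum size of a set of pairwise non-adjacent vertices. -/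
noncomputable def indepNum {V : Type*} [Fintype V] (G : SimpleGraph V) : ℕ :=
  sSup {n | ∃ s : Finset V, (↑s : Set V).Pairwise (fun a b => ¬ G.Adj a b) ∧ s.card = n}

/-- The spider `H_k` with `k` legs of length 2: the star `K_{1,k}` with every
edge subdivided once. Center `none`; leg `i` is `some (i,0), some (i,1)`. -/
def spider (k : ℕ) : SimpleGraph (Option (Fin k × Fin 2)) :=
  SimpleGraph.fromRel (fun a b =>
    (a = none ∧ ∃ i : Fin k, b = some (i, 0)) ∨
    (∃ i : Fin k, a = some (i, 0) ∧ b = some (i, 1)))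

section ConflictFree

variable {V : Type*} {G : SimpleGraph V} {c : Sym2 V → ℕ}

def CFJoined (G : SimpleGraph V) (c : Sym2 V → ℕ) (u v : V) : Prop :=
  ∃ p : G.Walk u v, p.IsPath ∧ ∃ col : ℕ, (p.edges.filter (fun e => c e = col)).length = 1

theorem CFJoined.symm {u v : V} (h : CFJoined G c u v) : CFJoined G c v u := by
  obtain ⟨p, hp, col, hcol⟩ := h
  refine ⟨p.reverse, hp.reverse, col, ?_⟩
  rwa [Walk.edges_reverse, List.filter_reverse, List.length_reverse]

theorem IsCFConnColoring.apply_ne_of_forall_isPath (hc : IsCFConnColoring G c) {u v w : V}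
    (huw : u ≠ w) (hpath : ∀ p : G.Walk u w, p.IsPath → p.edges = [s(u, v), s(v, w)]) :
    c s(u, v) ≠ c s(v, w) := by
  intro heq
  obtain ⟨p, hp, col, hcol⟩ := hc u w huw
  rw [hpath p hp] at hcol
  by_cases h : c s(v, w) = col <;> simp [heq, h] at hcol

theorem SimpleGraph.Walk.not_isPath_cons_cons_self {u v w : V} (h : G.Adj u v) (h' : G.Adj v u)
    (p : G.Walk u w) : ¬ (Walk.cons h (Walk.cons h' p)).IsPath := by
  simp [Walk.cons_isPath_iff]

theorem cfcNum_eq_of_isCFConnColoring {k : ℕ} (hlt : ∀ e, c e < k) (hc : IsCFConnColoring G c)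
    (hmin : ∀ m (c' : Sym2 V → ℕ), (∀ e, c' e < m) → IsCFConnColoring G c' → k ≤ m) :
    cfcNum G = k :=
  le_antisymm (Nat.sInf_le ⟨c, hlt, hc⟩)
    (le_csInf ⟨k, c, hlt, hc⟩ fun _ ⟨c', hlt', hc'⟩ ↦ hmin _ c' hlt' hc')

end ConflictFree

section Spider

variable {k : ℕ}

theorem spider_adj_none_iff {v : Option (Fin k × Fin 2)} :
    (spider k).Adj none v ↔ ∃ i, v = some (i, 0) := by
  simp only [spider, fromRel_adj]
  grind

theorem spider_adj_inner_iff {i : Fin k} {v : Option (Fin k × Fin 2)} :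
    (spider k).Adj (some (i, 0)) v ↔ v = none ∨ v = some (i, 1) := by
  simp only [spider, fromRel_adj]
  grind

theorem spider_adj_outer_iff {i : Fin k} {v : Option (Fin k × Fin 2)} :
    (spider k).Adj (some (i, 1)) v ↔ v = some (i, 0) := by
  simp only [spider, fromRel_adj]
  grind

theorem spider_adj_none_inner (i : Fin k) : (spider k).Adj none (some (i, 0)) :=
  spider_adj_none_iff.2 ⟨i, rfl⟩

theorem spider_adj_inner_outer (i : Fin k) : (spider k).Adj (some (i, 0)) (some (i, 1)) :=
  spider_adj_inner_iff.2 (Or.inr rfl)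

theorem spider_eq_outer_of_isPath {i : Fin k} {v : Option (Fin k × Fin 2)}
    (p : (spider k).Walk (some (i, 1)) v)
    (hp : (Walk.cons (spider_adj_inner_outer i) p).IsPath) : v = some (i, 1) := by
  cases p with
  | nil => rfl
  | cons h q =>
    obtain rfl := spider_adj_outer_iff.1 h
    exact absurd hp (Walk.not_isPath_cons_cons_self _ _ _)

theorem spider_edges_of_isPath {i j : Fin k} (hij : i ≠ j)
    (p : (spider k).Walk (some (i, 0)) (some (j, 0))) (hp : p.IsPath) :
    p.edges = [s(some (i, 0), none), s(none, some (j, 0))] := by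
  cases p with
  | nil => exact absurd rfl hij
  | cons h q =>
  rcases spider_adj_inner_iff.1 h with rfl | rfl
  · cases q with
    | cons h' q' =>
    obtain ⟨l, rfl⟩ := spider_adj_none_iff.1 h'
    cases q' with
    | nil => rfl
    | cons h'' q'' =>
    rcases spider_adj_inner_iff.1 h'' with rfl | rfl
    · exact absurd hp.tail (Walk.not_isPath_cons_cons_self _ _ _)
    · simpa using spider_eq_outer_of_isPath q'' hp.tail.tail
  · simpa using spider_eq_outer_of_isPath q hp

theorem le_of_isCFConnColoring_spider {m : ℕ} {c : Sym2 (Option (Fin k × Fin 2)) → ℕ}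
    (hlt : ∀ e, c e < m) (hc : IsCFConnColoring (spider k) c) : k ≤ m := by
  have hinj : Function.Injective
      fun i : Fin k ↦ (⟨c s(none, some (i, 0)), hlt _⟩ : Fin m) := by
    intro i j hij
    by_contra hne
    refine hc.apply_ne_of_forall_isPath (by simpa using hne) (spider_edges_of_isPath hne) ?_
    simpa [Sym2.eq_swap] using hij
  simpa using Fintype.card_le_of_injective _ hinj

end Spider

theorem Nat.add_one_mod_ne_self {i k : ℕ} (hi : i < k) (hk : 2 ≤ k) : (i + 1) % k ≠ i := by
  rw [Nat.add_mod_eq_ite, Nat.mod_eq_of_lt hi, Nat.mod_eq_of_lt (by omega : 1 < k)]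
  split <;> omega

theorem Nat.add_one_mod_ne_of_add_one_mod_eq {i j k : ℕ} (hi : i < k) (hj : j < k) (hk : 3 ≤ k)
    (h : (j + 1) % k = i) : (i + 1) % k ≠ j := by
  rw [Nat.add_mod_eq_ite, Nat.mod_eq_of_lt hj, Nat.mod_eq_of_lt (by omega : 1 < k)] at h
  rw [Nat.add_mod_eq_ite, Nat.mod_eq_of_lt hi, Nat.mod_eq_of_lt (by omega : 1 < k)]
  split at h <;> split <;> omega

section Coloring

variable {k : ℕ}

/-- Summing these weights over the two ends of an edge and reducing mod `k` colours the inner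
edge of leg `i` by `i` and its outer edge by `i + 1 mod k`. -/
def spiderWeight (k : ℕ) : Option (Fin k × Fin 2) → ℕ
  | none => 0
  | some (i, 0) => i
  | some (_, 1) => 1

def spiderColoring (k : ℕ) : Sym2 (Option (Fin k × Fin 2)) → ℕ :=
  Sym2.lift ⟨fun a b => (spiderWeight k a + spiderWeight k b) % k, fun _ _ => by
    dsimp only; rw [add_comm]⟩

@[simp]
theorem spiderColoring_none_inner (i : Fin k) : spiderColoring k s(none, some (i, 0)) = i := by
  simp [spiderColoring, spiderWeight, Nat.mod_eq_of_lt i.isLt]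

@[simp]
theorem spiderColoring_inner_outer (i : Fin k) :
    spiderColoring k s(some (i, 0), some (i, 1)) = (i + 1) % k := by
  simp [spiderColoring, spiderWeight]

theorem spiderColoring_lt (hk : 0 < k) (e : Sym2 (Option (Fin k × Fin 2))) :
    spiderColoring k e < k :=
  Sym2.ind (fun _ _ ↦ Nat.mod_lt _ hk) e

end Coloring

section Joined

variable {k : ℕ}

theorem cfJoined_none_inner (i : Fin k) :
    CFJoined (spider k) (spiderColoring k) none (some (i, 0)) :=
  ⟨(spider_adj_none_inner i).toWalk, by simp, i, by simp⟩

theorem cfJoined_none_outer (hk : 2 ≤ k) (i : Fin k) :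
    CFJoined (spider k) (spiderColoring k) none (some (i, 1)) := by
  refine ⟨.cons (spider_adj_none_inner i) (spider_adj_inner_outer i).toWalk, by simp, i, ?_⟩
  simp [Nat.add_one_mod_ne_self i.isLt hk]

theorem cfJoined_inner_outer (i : Fin k) :
    CFJoined (spider k) (spiderColoring k) (some (i, 0)) (some (i, 1)) :=
  ⟨(spider_adj_inner_outer i).toWalk, by simp, (i + 1) % k, by simp⟩

theorem cfJoined_inner_inner {i j : Fin k} (hij : i ≠ j) :
    CFJoined (spider k) (spiderColoring k) (some (i, 0)) (some (j, 0)) := by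
  refine ⟨.cons (spider_adj_none_inner i).symm (spider_adj_none_inner j).toWalk,
    by simp [hij], i, ?_⟩
  simp [Sym2.eq_swap, Fin.val_ne_of_ne hij.symm]

theorem cfJoined_inner_outer_of_ne (hk : 2 ≤ k) {i j : Fin k} (hij : i ≠ j) :
    CFJoined (spider k) (spiderColoring k) (some (i, 0)) (some (j, 1)) := by
  refine ⟨.cons (spider_adj_none_inner i).symm
    (.cons (spider_adj_none_inner j) (spider_adj_inner_outer j).toWalk), by simp [hij], ?_⟩
  by_cases hji : (j + 1) % k = i
  · exact ⟨j, by simp [Sym2.eq_swap, Fin.val_ne_of_ne hij, Nat.add_one_mod_ne_self j.isLt hk]⟩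
  · exact ⟨i, by simp [Sym2.eq_swap, Fin.val_ne_of_ne hij.symm, hji]⟩

theorem cfJoined_outer_outer (hk : 3 ≤ k) {i j : Fin k} (hij : i ≠ j) :
    CFJoined (spider k) (spiderColoring k) (some (i, 1)) (some (j, 1)) := by
  refine ⟨.cons (spider_adj_inner_outer i).symm (.cons (spider_adj_none_inner i).symm
    (.cons (spider_adj_none_inner j) (spider_adj_inner_outer j).toWalk)), by simp [hij], ?_⟩
  by_cases hji : (j + 1) % k = i
  · refine ⟨j, ?_⟩
    simp [Sym2.eq_swap, Fin.val_ne_of_ne hij, Nat.add_one_mod_ne_self j.isLt (by omega),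
      Nat.add_one_mod_ne_of_add_one_mod_eq i.isLt j.isLt hk hji]
  · refine ⟨i, ?_⟩
    simp [Sym2.eq_swap, Fin.val_ne_of_ne hij.symm, Nat.add_one_mod_ne_self i.isLt (by omega), hji]

end Joined

theorem isCFConnColoring_spiderColoring {k : ℕ} (hk : 3 ≤ k) :
    IsCFConnColoring (spider k) (spiderColoring k) := by
  have hk2 : 2 ≤ k := by omega
  rintro (_ | ⟨i, x⟩) (_ | ⟨j, y⟩) huv
  · exact absurd rfl huv
  · fin_cases y
    exacts [cfJoined_none_inner j, cfJoined_none_outer hk2 j]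
  · fin_cases x
    exacts [(cfJoined_none_inner i).symm, (cfJoined_none_outer hk2 i).symm]
  · obtain rfl | hij := eq_or_ne i j
    · fin_cases x <;> fin_cases y <;> simp at huv
      exacts [cfJoined_inner_outer i, (cfJoined_inner_outer i).symm]
    · fin_cases x <;> fin_cases y
      exacts [cfJoined_inner_inner hij, cfJoined_inner_outer_of_ne hk2 hij,
        (cfJoined_inner_outer_of_ne hk2 hij.symm).symm, cfJoined_outer_outer hk hij]

theorem stmt6 (k : ℕ) (hk : 3 ≤ k) : cfcNum (spider k) = k :=
  cfcNum_eq_of_isCFConnColoring (spiderColoring_lt (by omega)) (isCFConnColoring_spiderColoring hk)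
    fun _ _ ↦ le_of_isCFConnColoring_spider
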